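/- arXiv:2008.09919 — 4 statements merged into one kernel-verified Lean document; each statement's English description precedes it below -/
import Mathlib

section
/- Let f : ℝ^n × ℝ^m → ℝ be differentiable, μ-strongly convex–strongly concave with saddle point z* = (x*, y*), and suppose the operator F(z) = (∇_x f(x,y); −∇_y f(x,y)) is L-Lipschitz. Then for every z = (x, y), the merit function m(z) := (1/2)‖F(z)‖² satisfies (μ/L²)·m(z) ≤ max_{y'} f(x, y') − min_{x'} f(x', y). -/
/-!
Strong convexity of `f · y*` at its critical point `x*` gives `f x* y* + μ/2 ‖x - x*‖² ≤ f x y*`,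
and strong concavity of `f x* ·` gives `f x* y ≤ f x* y* - μ/2 ‖y - y*‖²`; hence the duality gap
at `(x, y)` is at least `μ/2 ‖z - z*‖²`. The supremum and infimum are finite because a strongly
convex function lies above a quadratic with positive leading coefficient. Finally `F z* = 0`,
so the Lipschitz bound gives `‖F z‖² ≤ L² ‖z - z*‖²`.
-/

open RealInnerProductSpace

section FirstOrder

variable {E : Type*} [NormedAddCommGroup E] [InnerProductSpace ℝ E]

theorem ConvexOn.le_of_hasFDerivAt {h : E → ℝ} {h' : E →L[ℝ] ℝ} {a : E}
    (hc : ConvexOn ℝ Set.univ h) (hh : HasFDerivAt h h' a) (b : E) :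
    h a + h' (b - a) ≤ h b := by
  set ℓ : ℝ →ᵃ[ℝ] E := AffineMap.lineMap a b
  have hφ : ConvexOn ℝ Set.univ (h ∘ ℓ) := by simpa using hc.comp_affineMap ℓ
  have hφ' : HasDerivAt (h ∘ ℓ) (h' (b - a)) 0 := by
    rw [← AffineMap.lineMap_apply_zero (k := ℝ) a b] at hh
    exact hh.comp_hasDerivAt 0 (by simpa using AffineMap.hasDerivAt_lineMap (x := (0 : ℝ)))
  have := hφ.le_slope_of_hasDerivAt (Set.mem_univ 0) (Set.mem_univ 1) one_pos hφ'
  simp only [Function.comp_apply, ℓ, AffineMap.lineMap_apply_zero, AffineMap.lineMap_apply_one,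
    slope_def_field, sub_zero, div_one] at this
  linarith

variable [CompleteSpace E]

theorem StrongConvexOn.le_of_hasGradientAt {g : E → ℝ} {μ : ℝ} {g' a : E}
    (hc : StrongConvexOn Set.univ μ g) (hg : HasGradientAt g g' a) (b : E) :
    g a + ⟪g', b - a⟫ + μ / 2 * ‖b - a‖ ^ 2 ≤ g b := by
  have hq := (hasStrictFDerivAt_norm_sq a).hasFDerivAt.const_mul (μ / 2)
  have key := (strongConvexOn_iff_convex.mp hc).le_of_hasFDerivAt
    ((hasGradientAt_iff_hasFDerivAt.mp hg).sub hq) b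
  simp only [sub_apply, InnerProductSpace.toDual_apply_apply,
    smul_apply, innerSL_apply_apply, smul_eq_mul, nsmul_eq_mul] at key
  rw [norm_sub_sq_real, real_inner_comm a b]
  rw [inner_sub_right a, real_inner_self_eq_norm_sq] at key
  push_cast at key
  linarith

theorem HasGradientAt.neg {g : E → ℝ} {g' a : E} (hg : HasGradientAt g g' a) :
    HasGradientAt (fun x => -g x) (-g') a := by
  rw [hasGradientAt_iff_hasFDerivAt, map_neg]
  exact (hasGradientAt_iff_hasFDerivAt.mp hg).neg

theorem StrongConvexOn.sub_norm_sq_div_le_of_hasGradientAt {g : E → ℝ} {μ : ℝ} {g' a : E}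
    (hμ : 0 < μ) (hc : StrongConvexOn Set.univ μ g) (hg : HasGradientAt g g' a) (b : E) :
    g a - ‖g'‖ ^ 2 / (2 * μ) ≤ g b := by
  have hinner : -(‖g'‖ * ‖b - a‖) ≤ ⟪g', b - a⟫ := neg_le_of_abs_le (abs_real_inner_le_norm _ _)
  have young : ‖g'‖ * ‖b - a‖ - μ / 2 * ‖b - a‖ ^ 2 ≤ ‖g'‖ ^ 2 / (2 * μ) := by
    rw [le_div_iff₀ (by positivity)]
    nlinarith [sq_nonneg (‖g'‖ - μ * ‖b - a‖)]
  linarith [hc.le_of_hasGradientAt hg b]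

end FirstOrder

section DualityGap

variable {E F : Type*} [NormedAddCommGroup E] [InnerProductSpace ℝ E] [CompleteSpace E]
  [NormedAddCommGroup F] [InnerProductSpace ℝ F] [CompleteSpace F]

theorem norm_sq_add_norm_sq_le_duality_gap {f : E → F → ℝ} {μ : ℝ} (hμ : 0 < μ)
    (hconv : ∀ y, StrongConvexOn Set.univ μ (fun x => f x y))
    (hconc : ∀ x, StrongConvexOn Set.univ μ (fun y => -f x y))
    {xs : E} {ys : F} (hxs : HasGradientAt (fun x => f x ys) 0 xs)
    (hys : HasGradientAt (f xs) 0 ys)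
    {x : E} {y : F} (hx : DifferentiableAt ℝ (fun x' => f x' y) x)
    (hy : DifferentiableAt ℝ (f x) y) :
    μ / 2 * (‖x - xs‖ ^ 2 + ‖y - ys‖ ^ 2) ≤ (⨆ y', f x y') - ⨅ x', f x' y := by
  have hbddAbove : BddAbove (Set.range (f x)) := by
    refine ⟨f x y + ‖gradient (f x) y‖ ^ 2 / (2 * μ), Set.forall_mem_range.2 fun y' => ?_⟩
    have := (hconc x).sub_norm_sq_div_le_of_hasGradientAt hμ hy.hasGradientAt.neg y'
    rw [norm_neg] at this
    linarith
  have hbddBelow : BddBelow (Set.range fun x' => f x' y) :=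
    ⟨_, Set.forall_mem_range.2
      ((hconv y).sub_norm_sq_div_le_of_hasGradientAt hμ hx.hasGradientAt)⟩
  have hxs_min := (hconv ys).le_of_hasGradientAt hxs x
  have hys_max := (hconc xs).le_of_hasGradientAt hys.neg y
  simp only [inner_zero_left, neg_zero, add_zero] at hxs_min hys_max
  calc μ / 2 * (‖x - xs‖ ^ 2 + ‖y - ys‖ ^ 2)
      ≤ f x ys - f xs y := by linarith
    _ ≤ (⨆ y', f x y') - ⨅ x', f x' y :=
      sub_le_sub (le_ciSup hbddAbove ys) (ciInf_le hbddBelow xs)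

end DualityGap

theorem merit_lower_bounds_duality_gap_general {n m : ℕ} (μ L : ℝ) (hμ : 0 < μ)
    (f : EuclideanSpace ℝ (Fin n) → EuclideanSpace ℝ (Fin m) → ℝ)
    (hdiff : Differentiable ℝ
      (fun z : EuclideanSpace ℝ (Fin n) × EuclideanSpace ℝ (Fin m) => f z.1 z.2))
    (hconv : ∀ y, StrongConvexOn Set.univ μ (fun x => f x y))
    (hconc : ∀ x, StrongConvexOn Set.univ μ (fun y => -f x y))
    (xstar : EuclideanSpace ℝ (Fin n)) (ystar : EuclideanSpace ℝ (Fin m))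
    (hFstar : gradient (fun x => f x ystar) xstar = 0 ∧
              gradient (fun y => f xstar y) ystar = 0)
    (hLip : ∀ x y x' y',
      Real.sqrt (‖gradient (fun x'' => f x'' y) x - gradient (fun x'' => f x'' y') x'‖ ^ 2 +
                 ‖gradient (fun y'' => f x y'') y - gradient (fun y'' => f x' y'') y'‖ ^ 2)
        ≤ L * Real.sqrt (‖x - x'‖ ^ 2 + ‖y - y'‖ ^ 2)) :
    ∀ x y, (μ / L ^ 2) *
        (1 / 2 * (‖gradient (fun x' => f x' y) x‖ ^ 2 + ‖gradient (fun y' => f x y') y‖ ^ 2))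
      ≤ (⨆ y', f x y') - (⨅ x', f x' y) := by
  intro x y
  have hdx : ∀ y, Differentiable ℝ (fun x => f x y) := fun y =>
    hdiff.comp (differentiable_id.prodMk (differentiable_const y))
  have hdy : ∀ x, Differentiable ℝ (f x) := fun x =>
    hdiff.comp ((differentiable_const x).prodMk differentiable_id)
  have hxs : HasGradientAt (fun x => f x ystar) 0 xstar :=
    hFstar.1 ▸ (hdx ystar xstar).hasGradientAt
  have hys : HasGradientAt (f xstar) 0 ystar := hFstar.2 ▸ (hdy xstar ystar).hasGradientAt
  set S := ‖gradient (fun x' => f x' y) x‖ ^ 2 + ‖gradient (fun y' => f x y') y‖ ^ 2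
  set T := ‖x - xstar‖ ^ 2 + ‖y - ystar‖ ^ 2
  have hST : S ≤ T * L ^ 2 := by
    have := (Real.sqrt_le_iff.1 (hLip x y xstar ystar)).2
    rwa [hFstar.1, hFstar.2, sub_zero, sub_zero, mul_pow, Real.sq_sqrt (by positivity),
      mul_comm] at this
  calc μ / L ^ 2 * (1 / 2 * S) = μ / 2 * (S / L ^ 2) := by ring
    _ ≤ μ / 2 * T := by gcongr; exact div_le_of_le_mul₀ (sq_nonneg L) (by positivity) hST
    _ ≤ (⨆ y', f x y') - (⨅ x', f x' y) :=
      norm_sq_add_norm_sq_le_duality_gap hμ hconv hconc hxs hys (hdx y x) (hdy x y)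

theorem merit_lower_bounds_duality_gap {n m : ℕ} (μ L : ℝ) (hμ : 0 < μ) (hL : 0 < L)
    (f : EuclideanSpace ℝ (Fin n) → EuclideanSpace ℝ (Fin m) → ℝ)
    (hdiff : Differentiable ℝ
      (fun z : EuclideanSpace ℝ (Fin n) × EuclideanSpace ℝ (Fin m) => f z.1 z.2))
    (hconv : ∀ y, StrongConvexOn Set.univ μ (fun x => f x y))
    (hconc : ∀ x, StrongConvexOn Set.univ μ (fun y => -f x y))
    (xstar : EuclideanSpace ℝ (Fin n)) (ystar : EuclideanSpace ℝ (Fin m))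
    (hsaddle : ∀ x y, f xstar y ≤ f xstar ystar ∧ f xstar ystar ≤ f x ystar)
    (hFstar : gradient (fun x => f x ystar) xstar = 0 ∧
              gradient (fun y => f xstar y) ystar = 0)
    (hLip : ∀ x y x' y',
      Real.sqrt (‖gradient (fun x'' => f x'' y) x - gradient (fun x'' => f x'' y') x'‖ ^ 2 +
                 ‖gradient (fun y'' => f x y'') y - gradient (fun y'' => f x' y'') y'‖ ^ 2)
        ≤ L * Real.sqrt (‖x - x'‖ ^ 2 + ‖y - y'‖ ^ 2)) :
    ∀ x y, (μ / L ^ 2) *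
        (1 / 2 * (‖gradient (fun x' => f x' y) x‖ ^ 2 + ‖gradient (fun y' => f x y') y‖ ^ 2))
      ≤ (⨆ y', f x y') - (⨅ x', f x' y) :=
  merit_lower_bounds_duality_gap_general μ L hμ f hdiff hconv hconc xstar ystar hFstar hLip
end

section
/- Let f : ℝ^n × ℝ^m → ℝ be twice differentiable, μ-strongly convex in x and μ-strongly concave in y, with ∇_x f and ∇_y f L-Lipschitz in (x,y). For any point (x, y), letting y*(x) = argmax_{y'} f(x, y') and x*(y) = argmin_{x'} f(x', y), the duality gap satisfies f(x, y*(x)) − f(x*(y), y) ≤ (L/μ²)·m(z), where m(z) = (1/2)(‖∇_x f(x,y)‖² + ‖∇_y f(x,y)‖²). -/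
/-!
Strong convexity gives the Polyak–Łojasiewicz inequality `g x - g y ≤ ‖∇g x‖² / (2μ)`: minimize
the quadratic lower bound `g x + ⟪∇g x, y - x⟫ + μ/2 ‖y - x‖²` over `y`. Splitting the gap as
`(f(x, y*) - f(x, y)) + (f(x, y) - f(x*, y))` and applying this in each variable bounds it by
`m(z) / μ`, which is at most `(L / μ²) m(z)` because `μ ≤ L`.
-/

open Set InnerProductSpace
open scoped RealInnerProductSpace

theorem ConvexOn.add_le_of_hasFDerivAt {E : Type*} [NormedAddCommGroup E] [NormedSpace ℝ E]
    {s : Set E} {g : E → ℝ} {g' : E →L[ℝ] ℝ} {x y : E} (hg : ConvexOn ℝ s g)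
    (hd : HasFDerivAt g g' x) (hx : x ∈ s) (hy : y ∈ s) :
    g x + g' (y - x) ≤ g y := by
  set line : ℝ →ᵃ[ℝ] E := AffineMap.lineMap x y
  have hconv : ConvexOn ℝ (line ⁻¹' s) (g ∘ line) := hg.comp_affineMap line
  have hderiv : HasDerivAt (g ∘ line) (g' (y - x)) 0 := by
    have hd0 : HasFDerivAt g g' (line 0) := by simpa [line] using hd
    exact hd0.comp_hasDerivAt 0 AffineMap.hasDerivAt_lineMap
  have hslope := hconv.le_slope_of_hasDerivAt (x := 0) (y := 1) (by simpa [line] using hx)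
    (by simpa [line] using hy) one_pos hderiv
  simp only [slope_def_field, Function.comp_apply, line, AffineMap.lineMap_apply_zero,
    AffineMap.lineMap_apply_one, sub_zero, div_one] at hslope
  linarith

section InnerProductSpace

variable {E : Type*} [NormedAddCommGroup E] [InnerProductSpace ℝ E] [CompleteSpace E]
  {s : Set E} {μ : ℝ} {g : E → ℝ} {g' x y : E}

theorem StrongConvexOn.add_inner_add_le_of_hasGradientAt (hg : StrongConvexOn s μ g)
    (hd : HasGradientAt g g' x) (hx : x ∈ s) (hy : y ∈ s) :
    g x + ⟪g', y - x⟫ + μ / 2 * ‖y - x‖ ^ 2 ≤ g y := by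
  have hquad : HasFDerivAt (fun z => g z - μ / 2 * ‖z‖ ^ 2)
      (toDual ℝ E g' - (μ / 2) • (2 • innerSL ℝ x)) x :=
    (hasGradientAt_iff_hasFDerivAt.mp hd).sub
      ((hasStrictFDerivAt_norm_sq x).hasFDerivAt.const_mul (μ / 2))
  have h := (strongConvexOn_iff_convex.mp hg).add_le_of_hasFDerivAt hquad hx hy
  simp only [sub_apply, smul_apply, toDual_apply_apply, innerSL_apply_apply, smul_eq_mul,
    nsmul_eq_mul, Nat.cast_ofNat] at h
  have hnorm : ‖y - x‖ ^ 2 = ‖y‖ ^ 2 - ‖x‖ ^ 2 - 2 * ⟪x, y - x⟫ := by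
    rw [norm_sub_sq_real, inner_sub_right, real_inner_self_eq_norm_sq, real_inner_comm]
    ring
  rw [hnorm]
  linarith

theorem StrongConvexOn.sub_le_norm_sq_div_of_hasGradientAt (hμ : 0 < μ)
    (hg : StrongConvexOn s μ g) (hd : HasGradientAt g g' x) (hx : x ∈ s) (hy : y ∈ s) :
    g x - g y ≤ ‖g'‖ ^ 2 / (2 * μ) := by
  have htangent := hg.add_inner_add_le_of_hasGradientAt hd hx hy
  have hcs : -⟪g', y - x⟫ ≤ ‖g'‖ * ‖y - x‖ := (neg_le_abs _).trans (abs_real_inner_le_norm _ _)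
  rw [le_div_iff₀ (by positivity)]
  nlinarith [sq_nonneg (‖g'‖ - μ * ‖y - x‖)]

end InnerProductSpace

theorem merit_upper_bounds_duality_gap_general {n m : ℕ} (μ L : ℝ) (hμ : 0 < μ) (hμL : μ ≤ L)
    (f : EuclideanSpace ℝ (Fin n) → EuclideanSpace ℝ (Fin m) → ℝ)
    (hdiff : ContDiff ℝ 2
      (fun z : EuclideanSpace ℝ (Fin n) × EuclideanSpace ℝ (Fin m) => f z.1 z.2))
    (hconv : ∀ y, StrongConvexOn Set.univ μ (fun x => f x y))
    (hconc : ∀ x, StrongConvexOn Set.univ μ (fun y => -f x y))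
    (xstar : EuclideanSpace ℝ (Fin m) → EuclideanSpace ℝ (Fin n))
    (ystar : EuclideanSpace ℝ (Fin n) → EuclideanSpace ℝ (Fin m)) :
    ∀ x y, f x (ystar x) - f (xstar y) y
      ≤ (L / μ ^ 2) *
        (1 / 2 * (‖gradient (fun x' => f x' y) x‖ ^ 2 +
                  ‖gradient (fun y' => f x y') y‖ ^ 2)) := by
  intro x y
  have hf := hdiff.differentiable (by norm_num)
  have hdx : DifferentiableAt ℝ (fun x' => f x' y) x :=
    (hf.comp (differentiable_id.prodMk (differentiable_const y))).differentiableAt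
  have hdy : DifferentiableAt ℝ (fun y' => f x y') y :=
    (hf.comp ((differentiable_const x).prodMk differentiable_id)).differentiableAt
  have hgrady : HasGradientAt (fun y' => -f x y') (-gradient (fun y' => f x y') y) y := by
    rw [hasGradientAt_iff_hasFDerivAt, map_neg]
    exact (hasGradientAt_iff_hasFDerivAt.mp hdy.hasGradientAt).neg
  have hxgap := (hconv y).sub_le_norm_sq_div_of_hasGradientAt hμ hdx.hasGradientAt
    (mem_univ x) (mem_univ (xstar y))
  have hygap := (hconc x).sub_le_norm_sq_div_of_hasGradientAt hμ hgrady
    (mem_univ y) (mem_univ (ystar x))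
  rw [norm_neg] at hygap
  set a := ‖gradient (fun x' => f x' y) x‖ ^ 2
  set b := ‖gradient (fun y' => f x y') y‖ ^ 2
  calc f x (ystar x) - f (xstar y) y
      ≤ a / (2 * μ) + b / (2 * μ) := by linarith
    _ = μ / μ ^ 2 * (1 / 2 * (a + b)) := by field_simp
    _ ≤ L / μ ^ 2 * (1 / 2 * (a + b)) := by gcongr

theorem merit_upper_bounds_duality_gap {n m : ℕ} (μ L : ℝ) (hμ : 0 < μ) (hμL : μ ≤ L)
    (f : EuclideanSpace ℝ (Fin n) → EuclideanSpace ℝ (Fin m) → ℝ)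
    (hdiff : ContDiff ℝ 2
      (fun z : EuclideanSpace ℝ (Fin n) × EuclideanSpace ℝ (Fin m) => f z.1 z.2))
    (hconv : ∀ y, StrongConvexOn Set.univ μ (fun x => f x y))
    (hconc : ∀ x, StrongConvexOn Set.univ μ (fun y => -f x y))
    (hLip : ∀ x y x' y',
      Real.sqrt (‖gradient (fun x'' => f x'' y) x - gradient (fun x'' => f x'' y') x'‖ ^ 2 +
                 ‖gradient (fun y'' => f x y'') y - gradient (fun y'' => f x' y'') y'‖ ^ 2)
        ≤ L * Real.sqrt (‖x - x'‖ ^ 2 + ‖y - y'‖ ^ 2))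
    (xstar : EuclideanSpace ℝ (Fin m) → EuclideanSpace ℝ (Fin n))
    (ystar : EuclideanSpace ℝ (Fin n) → EuclideanSpace ℝ (Fin m))
    (hxstar : ∀ y x', f (xstar y) y ≤ f x' y)
    (hystar : ∀ x y', f x y' ≤ f x (ystar x)) :
    ∀ x y, f x (ystar x) - f (xstar y) y
      ≤ (L / μ ^ 2) *
        (1 / 2 * (‖gradient (fun x' => f x' y) x‖ ^ 2 +
                  ‖gradient (fun y' => f x y') y‖ ^ 2)) :=
  merit_upper_bounds_duality_gap_general μ L hμ hμL f hdiff hconv hconc xstar ystar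
end

section
/- Fix constants L₂, C > 0, λ ∈ (0, 1/(4L₂C + 2)], and a positive sequence ν_{k+1} = (1 − λ)ν_k. Let (z_k) and (w_k) be sequences in ℝ^d such that ‖z_0 − w_0‖ ≤ ν_0/(2L₂), and for all k: ‖z_{k+1} − w_k‖ ≤ (L₂/ν_k)‖z_k − w_k‖² and ‖w_k − w_{k+1}‖ ≤ Cλν_k. Then ‖z_k − w_k‖ ≤ ν_k/(2L₂) for all k. -/
theorem homotopy_induction {d : ℕ} (L₂ C lam ν₀ : ℝ) (hL₂ : 0 < L₂) (hC : 0 < C)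
    (hlam : lam ∈ Set.Ioc (0 : ℝ) (1 / (4 * L₂ * C + 2))) (hν₀ : 0 < ν₀)
    (ν : ℕ → ℝ) (hν0 : ν 0 = ν₀) (hνrec : ∀ k, ν (k + 1) = (1 - lam) * ν k)
    (z w : ℕ → EuclideanSpace ℝ (Fin d))
    (hinit : ‖z 0 - w 0‖ ≤ ν 0 / (2 * L₂))
    (hquad : ∀ k, ‖z (k + 1) - w k‖ ≤ (L₂ / ν k) * ‖z k - w k‖ ^ 2)
    (herr : ∀ k, ‖w k - w (k + 1)‖ ≤ C * lam * ν k) :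
    ∀ k, ‖z k - w k‖ ≤ ν k / (2 * L₂) := by
  obtain ⟨hlam0, hlam1⟩ := hlam
  have hden : (0:ℝ) < 4 * L₂ * C + 2 := by positivity
  have hlam' : lam * (4 * L₂ * C + 2) ≤ 1 := by
    rw [le_div_iff₀ hden] at hlam1
    linarith
  have hlamlt : lam < 1 := by nlinarith
  have hνpos : ∀ k, 0 < ν k := by
    intro k
    induction k with
    | zero => rw [hν0]; exact hν₀
    | succ n ih => rw [hνrec]; nlinarith
  intro k
  induction k with
  | zero => exact hinit
  | succ n ih =>
    have hν := hνpos n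
    have h1 := hquad n
    have h2 := herr n
    have hnn : (0:ℝ) ≤ ‖z n - w n‖ := norm_nonneg _
    have hsq : ‖z n - w n‖ ^ 2 ≤ (ν n / (2 * L₂)) ^ 2 := by
      apply pow_le_pow_left₀ hnn ih
    have htri : ‖z (n+1) - w (n+1)‖ ≤ ‖z (n+1) - w n‖ + ‖w n - w (n+1)‖ := by
      calc ‖z (n+1) - w (n+1)‖ = ‖(z (n+1) - w n) + (w n - w (n+1))‖ := by abel_nf
        _ ≤ _ := norm_add_le _ _
    have hstep : (L₂ / ν n) * ‖z n - w n‖ ^ 2 ≤ ν n / (4 * L₂) := by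
      calc (L₂ / ν n) * ‖z n - w n‖ ^ 2 ≤ (L₂ / ν n) * (ν n / (2 * L₂)) ^ 2 := by
            apply mul_le_mul_of_nonneg_left hsq (by positivity)
        _ = ν n / (4 * L₂) := by field_simp; ring
    rw [hνrec]
    have : ν n / (4 * L₂) + C * lam * ν n ≤ (1 - lam) * ν n / (2 * L₂) := by
      rw [div_add' _ _ _ (by positivity : (4*L₂:ℝ) ≠ 0), div_le_div_iff₀ (by positivity) (by positivity)]
      nlinarith [mul_pos hν hL₂]
    linarith
end

section
/- Let θ ∈ (0,1), ξ ∈ (0,1), and define a_0 ∈ (0,1) with a_{k+1} = a_k − ξ·a_k^{1/θ}. Assuming 0 < a_k < 1 for all k, the sequence satisfies a_k ≤ (1 + ((1−θ)/θ)·ξ·k)^{−θ/(1−θ)} for all k ≥ 0. -/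
/-!
Writing `p = (1 - θ) / θ`, so that `1 / θ = 1 + p`, the quantity `a_k ^ (-p)` grows by at least
`p ξ` per step: `a_{k+1} = a_k (1 - ξ a_k ^ p)`, and the Bernoulli inequality
`(1 + x) ^ (-p) ≥ 1 - p x` turns the factor `(1 - ξ a_k ^ p) ^ (-p)` into the increment `p ξ`.
Hence `a_k ^ (-p) ≥ 1 + p ξ k`, and raising to the power `-1/p` gives the rate.
-/

open Real

lemma one_sub_mul_le_one_add_rpow_neg {x p : ℝ} (hx : -1 < x) (hp : 0 < p) :
    1 - p * x ≤ (1 + x) ^ (-p) := by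
  have hy : 0 < 1 + x := by linarith
  -- weighted AM-GM for `(1 + x) ^ (-p)` and `1 + x` with weights `1 / (1 + p)` and `p / (1 + p)`
  have hamgm := geom_mean_le_arith_mean2_weighted (w₁ := 1 / (1 + p)) (w₂ := p / (1 + p))
    (by positivity) (by positivity) (rpow_nonneg hy.le (-p)) hy.le (by field_simp)
  have hgeom : ((1 + x) ^ (-p)) ^ (1 / (1 + p)) * (1 + x) ^ (p / (1 + p)) = 1 := by
    rw [← rpow_mul hy.le, ← rpow_add hy, neg_mul, one_div, ← div_eq_mul_inv, neg_add_cancel,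
      rpow_zero]
  rw [hgeom] at hamgm
  have h1p : 0 < 1 + p := by linarith
  rw [div_mul_eq_mul_div, div_mul_eq_mul_div, ← add_div, le_div_iff₀ h1p] at hamgm
  linarith

lemma rpow_neg_add_mul_le_rpow_neg_sub_mul_rpow {a c p : ℝ} (ha : 0 < a) (hp : 0 < p)
    (hpos : 0 < a - c * a ^ (1 + p)) :
    a ^ (-p) + p * c ≤ (a - c * a ^ (1 + p)) ^ (-p) := by
  have hfactor : a - c * a ^ (1 + p) = a * (1 + -(c * a ^ p)) := by
    rw [rpow_add ha, rpow_one]; ring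
  have hx : -1 < -(c * a ^ p) := by
    rw [hfactor] at hpos
    linarith [pos_of_mul_pos_right hpos ha.le]
  have hcancel : a ^ (-p) * a ^ p = 1 := by
    rw [← rpow_add ha, neg_add_cancel, rpow_zero]
  calc a ^ (-p) + p * c = a ^ (-p) * (1 - p * -(c * a ^ p)) := by
        linear_combination (-(p * c)) * hcancel
    _ ≤ a ^ (-p) * (1 + -(c * a ^ p)) ^ (-p) := by
        gcongr
        exact one_sub_mul_le_one_add_rpow_neg hx hp
    _ = (a - c * a ^ (1 + p)) ^ (-p) := by
        rw [hfactor, mul_rpow ha.le (by linarith)]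

lemma one_add_mul_le_rpow_neg_of_rec {a : ℕ → ℝ} {c p : ℝ} (hp : 0 < p) (ha0 : a 0 ≤ 1)
    (hpos : ∀ k, 0 < a k) (hrec : ∀ k, a (k + 1) = a k - c * a k ^ (1 + p)) (k : ℕ) :
    1 + p * c * k ≤ a k ^ (-p) := by
  induction k with
  | zero =>
    simpa using one_le_rpow_of_pos_of_le_one_of_nonpos (hpos 0) ha0 (neg_nonpos.mpr hp.le)
  | succ k ih =>
    have hstep := rpow_neg_add_mul_le_rpow_neg_sub_mul_rpow (hpos k) hp (hrec k ▸ hpos (k + 1))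
    rw [← hrec k] at hstep
    push_cast
    linarith

theorem sublinear_recursion_rate_general (θ ξ : ℝ) (hθ : θ ∈ Set.Ioo (0 : ℝ) 1)
    (hξ : ξ ∈ Set.Ioo (0 : ℝ) 1) (a : ℕ → ℝ)
    (harec : ∀ k, a (k + 1) = a k - ξ * a k ^ (1 / θ))
    (hak : ∀ k, a k ∈ Set.Ioo (0 : ℝ) 1) :
    ∀ k : ℕ, a k ≤ (1 + (1 - θ) / θ * ξ * k) ^ (-(θ / (1 - θ))) := by
  obtain ⟨hθ0, hθ1⟩ := hθ
  set p := (1 - θ) / θ with hp_def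
  have hp : 0 < p := div_pos (by linarith) hθ0
  have hrec_exp : 1 / θ = 1 + p := by rw [hp_def]; field_simp; ring
  have hrate_exp : -(θ / (1 - θ)) = (-p)⁻¹ := by rw [inv_neg, inv_div]
  rw [hrec_exp] at harec
  intro k
  have hbound := one_add_mul_le_rpow_neg_of_rec hp (hak 0).2.le (fun k ↦ (hak k).1) harec k
  have hbase : 0 < 1 + p * ξ * k := by have := hξ.1; positivity
  rw [hrate_exp]
  exact (le_rpow_inv_iff_of_neg (hak k).1 hbase (neg_lt_zero.mpr hp)).mpr hbound

theorem sublinear_recursion_rate (θ ξ : ℝ) (hθ : θ ∈ Set.Ioo (0 : ℝ) 1)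
    (hξ : ξ ∈ Set.Ioo (0 : ℝ) 1) (a : ℕ → ℝ)
    (ha0 : a 0 ∈ Set.Ioo (0 : ℝ) 1)
    (harec : ∀ k, a (k + 1) = a k - ξ * a k ^ (1 / θ))
    (hak : ∀ k, a k ∈ Set.Ioo (0 : ℝ) 1) :
    ∀ k : ℕ, a k ≤ (1 + (1 - θ) / θ * ξ * k) ^ (-(θ / (1 - θ))) :=
  sublinear_recursion_rate_general θ ξ hθ hξ a harec hak
end
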